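/- Let α > 1/2. The function F is differentiable on ℝ and F′(λ) = i H(λ) for every λ ∈ ℝ. -/

import Mathlib

open MeasureTheory Filter

/-- The partial integral
`∫_{-R}^{R} sgn ξ · e^{-i·sgn ξ·π/4} |ξ|^{-1/2} e^{i(λξ + ξ|ξ|^α)} dξ` defining `F(λ)`. -/
noncomputable def Fpartial (α l R : ℝ) : ℂ :=
  ∫ ξ in (-R)..R,
    (Real.sign ξ : ℂ) *
      Complex.exp (-Complex.I * (Real.sign ξ : ℂ) * ((Real.pi / 4 : ℝ) : ℂ)) *
      ((|ξ| ^ (-(2⁻¹) : ℝ) : ℝ) : ℂ) *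
      Complex.exp (Complex.I * ((l * ξ + ξ * |ξ| ^ α : ℝ) : ℂ))

/-- The partial integral
`∫_{-R}^{R} e^{-i·sgn ξ·π/4} |ξ|^{1/2} e^{i(λξ + ξ|ξ|^α)} dξ` defining `H(λ)`. -/
noncomputable def Hpartial (α l R : ℝ) : ℂ :=
  ∫ ξ in (-R)..R,
    Complex.exp (-Complex.I * (Real.sign ξ : ℂ) * ((Real.pi / 4 : ℝ) : ℂ)) *
      ((|ξ| ^ (2⁻¹ : ℝ) : ℝ) : ℂ) *
      Complex.exp (Complex.I * ((l * ξ + ξ * |ξ| ^ α : ℝ) : ℂ))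

/-!
Differentiating under the integral sign gives `∂_λ Fpartial = i Hpartial`, since `ξ` times the
integrand of `F` is the integrand of `H`; so it suffices that `Fpartial α λ R` converges and
`Hpartial α λ R` converges locally uniformly in `λ` as `R → ∞`. Both integrands satisfy
`f(-ξ) = ±conj (f ξ)`, which reduces the tails to `∫_b^c ξ^β e^{i(λξ + ξ^{1+α})} dξ` with
`β = ∓1/2`. For large `ξ` the phase derivative `λ + (1+α)ξ^α` is at least `ξ^α/2` and the
amplitude `ξ^β / (λ + (1+α)ξ^α)` is decreasing, so a single integration by parts bounds this
tail by `4 b^{β-α}`, uniformly for bounded `λ`; it tends to `0` because `β ≤ 1/2 < α`.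
-/

open Set Complex
open scoped ComplexConjugate

@[fun_prop]
theorem Real.measurable_sign : Measurable Real.sign :=
  Measurable.ite measurableSet_Iio measurable_const
    (Measurable.ite measurableSet_Ioi measurable_const measurable_const)

theorem locallyIntegrable_of_norm_le_abs_rpow {E : Type*} [NormedAddCommGroup E] {f : ℝ → E}
    {r : ℝ} (hr : -1 < r) (hf : AEStronglyMeasurable f) (hbound : ∀ x, ‖f x‖ ≤ |x| ^ r) :
    LocallyIntegrable f :=
  locallyIntegrable_of_norm_le_rpow (μ := volume) (α := -r) (C := 1) (by simp) (by simp; linarith)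
    (Eventually.of_forall fun x => by simpa using hbound x) hf

theorem uniformCauchySeqOn_of_norm_sub_le {ι X E : Type*} [SemilatticeSup ι] [Nonempty ι]
    [SeminormedAddCommGroup E] {F : ι → X → E} {s : Set X} {ε : ι → ℝ}
    (hε : Tendsto ε atTop (nhds 0)) (hF : ∀ᶠ b in atTop, ∀ c ≥ b, ∀ x ∈ s, ‖F c x - F b x‖ ≤ ε b) :
    UniformCauchySeqOn F atTop s := by
  rw [Metric.uniformCauchySeqOn_iff]
  intro δ hδ
  obtain ⟨N, hN, hεN⟩ := (hF.and (hε.eventually (gt_mem_nhds (half_pos hδ)))).exists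
  refine ⟨N, fun m hm n hn x hx => ?_⟩
  calc dist (F m x) (F n x) ≤ dist (F m x) (F N x) + dist (F n x) (F N x) :=
        dist_triangle_right _ _ _
    _ ≤ ε N + ε N := by
        rw [dist_eq_norm, dist_eq_norm]
        exact add_le_add (hN m hm x hx) (hN n hn x hx)
    _ < δ := by linarith

theorem norm_integral_symm_sub_le {f : ℝ → ℂ} (hf : LocallyIntegrable f) {ε : ℂ} (hε : ‖ε‖ = 1)
    (hsymm : ∀ x, f (-x) = ε * conj (f x)) (b c : ℝ) :
    ‖(∫ x in -c..c, f x) - ∫ x in -b..b, f x‖ ≤ 2 * ‖∫ x in b..c, f x‖ := by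
  have hint : ∀ a b, IntervalIntegrable f volume a b := fun a b =>
    (hf.integrableOn_isCompact isCompact_uIcc).intervalIntegrable
  have hsplit : (∫ x in -c..c, f x) - ∫ x in -b..b, f x
      = (∫ x in -c..-b, f x) + ∫ x in b..c, f x := by
    have h1 := intervalIntegral.integral_add_adjacent_intervals (hint (-c) (-b)) (hint (-b) b)
    have h2 := intervalIntegral.integral_add_adjacent_intervals (hint (-c) b) (hint b c)
    linear_combination -h1 - h2
  have hreflect : ∫ x in -c..-b, f x = ε * conj (∫ x in b..c, f x) := by
    simp only [← intervalIntegral.integral_comp_neg, hsymm, intervalIntegral.integral_const_mul,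
      intervalIntegral.intervalIntegral_conj]
  rw [hsplit, hreflect]
  calc ‖ε * conj (∫ x in b..c, f x) + ∫ x in b..c, f x‖
      ≤ ‖ε * conj (∫ x in b..c, f x)‖ + ‖∫ x in b..c, f x‖ := norm_add_le _ _
    _ = 2 * ‖∫ x in b..c, f x‖ := by rw [norm_mul, hε, one_mul, RCLike.norm_conj]; ring

theorem norm_integral_mul_deriv_mul_cexp_le {u u' φ φ' : ℝ → ℝ} {b c : ℝ} (hbc : b ≤ c)
    (hu : ∀ x ∈ Icc b c, HasDerivAt u (u' x) x) (hu' : ∀ x ∈ Icc b c, u' x ≤ 0)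
    (huc : 0 ≤ u c) (hφ : ∀ x ∈ Icc b c, HasDerivAt φ (φ' x) x)
    (hφ' : ContinuousOn φ' (Icc b c)) :
    ‖∫ x in b..c, ((u x * φ' x : ℝ) : ℂ) * exp (I * φ x)‖ ≤ 2 * u b := by
  rw [← uIcc_of_le hbc] at hu hu' hφ hφ'
  have hu'_int : IntervalIntegrable u' volume b c := by
    have := intervalIntegral.intervalIntegrable_deriv_of_nonneg (g := fun x => -u x)
      (fun x hx => (hu x hx).continuousAt.neg.continuousWithinAt)
      (fun x hx => (hu x (Ioo_subset_Icc_self hx)).neg)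
      (fun x hx => neg_nonneg.2 (hu' x (Ioo_subset_Icc_self hx)))
    simpa only [Pi.neg_def, neg_neg] using this.neg
  have hv : ∀ x ∈ uIcc b c,
      HasDerivAt (fun x => exp (I * φ x)) (exp (I * φ x) * (I * φ' x)) x :=
    fun x hx => ((hφ x hx).ofReal_comp.const_mul I).cexp
  have hv'_int : IntervalIntegrable (fun x => exp (I * φ x) * (I * φ' x)) volume b c := by
    have : ContinuousOn φ (uIcc b c) := fun x hx => (hφ x hx).continuousAt.continuousWithinAt
    exact ContinuousOn.intervalIntegrable (by fun_prop)
  have ibp := intervalIntegral.integral_mul_deriv_eq_deriv_mul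
    (fun x hx => (hu x hx).ofReal_comp) hv ⟨hu'_int.1.ofReal, hu'_int.2.ofReal⟩ hv'_int
  have hrem : ‖∫ x in b..c, (u' x : ℂ) * exp (I * φ x)‖ ≤ u b - u c := by
    calc ‖∫ x in b..c, (u' x : ℂ) * exp (I * φ x)‖ ≤ ∫ x in b..c, -u' x := by
          refine intervalIntegral.norm_integral_le_of_norm_le hbc
            (Eventually.of_forall fun x hx => ?_) hu'_int.neg
          rw [norm_mul, norm_exp_I_mul_ofReal, mul_one, norm_real, Real.norm_eq_abs,
            abs_of_nonpos (hu' x (by rw [uIcc_of_le hbc]; exact Ioc_subset_Icc_self hx))]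
      _ = u b - u c := by
          rw [intervalIntegral.integral_neg,
            intervalIntegral.integral_eq_sub_of_hasDerivAt hu hu'_int, neg_sub]
  have hub : 0 ≤ u b := huc.trans (sub_nonneg.1 ((norm_nonneg _).trans hrem))
  calc ‖∫ x in b..c, ((u x * φ' x : ℝ) : ℂ) * exp (I * φ x)‖
      = ‖(∫ x in b..c, (u x : ℂ) * (exp (I * φ x) * (I * φ' x))) * -I‖ := by
        rw [← intervalIntegral.integral_mul_const]
        congr 2; ext x; push_cast
        linear_combination (u x * φ' x * exp (I * φ x)) * I_sq
    _ ≤ u c + u b + (u b - u c) := by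
        rw [norm_mul, norm_neg, norm_I, mul_one, ibp]
        refine (norm_sub_le _ _).trans (add_le_add ((norm_sub_le _ _).trans ?_) hrem)
        simp [norm_exp_I_mul_ofReal, abs_of_nonneg huc, abs_of_nonneg hub]
    _ = 2 * u b := by ring

noncomputable def rpowChirp (α β l x : ℝ) : ℂ :=
  ((x ^ β : ℝ) : ℂ) * exp (I * ((l * x + x * x ^ α : ℝ) : ℂ))

theorem hasDerivAt_mul_add_mul_rpow {α : ℝ} (l : ℝ) {x : ℝ} (hx : 0 < x) :
    HasDerivAt (fun x => l * x + x * x ^ α) (l + (1 + α) * x ^ α) x := by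
  have := ((hasDerivAt_id x).const_mul l).add
    ((hasDerivAt_id x).mul (Real.hasDerivAt_rpow_const (p := α) (Or.inl hx.ne')))
  refine this.congr_deriv ?_
  simp only [id, mul_one, one_mul]
  rw [Real.rpow_sub_one hx.ne']
  field_simp

theorem hasDerivAt_rpow_div_add_mul_rpow {α β l x : ℝ} (hx : 0 < x) (hp : l + (1 + α) * x ^ α ≠ 0) :
    HasDerivAt (fun x => x ^ β / (l + (1 + α) * x ^ α))
      (x ^ (β - 1) * (β * l - (1 + α) * (α - β) * x ^ α) / (l + (1 + α) * x ^ α) ^ 2) x := by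
  have := (Real.hasDerivAt_rpow_const (p := β) (Or.inl hx.ne')).div
    (((Real.hasDerivAt_rpow_const (p := α) (Or.inl hx.ne')).const_mul (1 + α)).const_add l) hp
  refine this.congr_deriv ?_
  rw [Real.rpow_sub_one hx.ne', Real.rpow_sub_one hx.ne']
  field_simp
  ring

theorem norm_integral_rpowChirp_le {α β l b c : ℝ} (hb : 0 < b) (hbc : b ≤ c)
    (hfreq : ∀ x ∈ Icc b c, x ^ α / 2 ≤ l + (1 + α) * x ^ α)
    (hanti : ∀ x ∈ Icc b c, β * l ≤ (1 + α) * (α - β) * x ^ α) :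
    ‖∫ x in b..c, rpowChirp α β l x‖ ≤ 4 * b ^ (β - α) := by
  have hpos : ∀ x ∈ Icc b c, 0 < x := fun x hx => hb.trans_le hx.1
  have hfreq_pos : ∀ x ∈ Icc b c, 0 < l + (1 + α) * x ^ α := fun x hx =>
    (half_pos (Real.rpow_pos_of_pos (hpos x hx) α)).trans_le (hfreq x hx)
  have hcont : ContinuousOn (fun x : ℝ => x ^ α) (Icc b c) := fun x hx =>
    (Real.continuousAt_rpow_const _ _ (Or.inl (hpos x hx).ne')).continuousWithinAt
  have hibp := norm_integral_mul_deriv_mul_cexp_le (φ := fun x => l * x + x * x ^ α)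
    (u := fun x => x ^ β / (l + (1 + α) * x ^ α)) (φ' := fun x => l + (1 + α) * x ^ α) hbc
    (fun x hx => hasDerivAt_rpow_div_add_mul_rpow (hpos x hx) (hfreq_pos x hx).ne')
    (fun x hx => div_nonpos_of_nonpos_of_nonneg (mul_nonpos_of_nonneg_of_nonpos
      (Real.rpow_nonneg (hpos x hx).le _) (by linarith [hanti x hx])) (sq_nonneg _))
    (div_nonneg (Real.rpow_nonneg (hpos c ⟨hbc, le_rfl⟩).le β) (hfreq_pos c ⟨hbc, le_rfl⟩).le)
    (fun x hx => hasDerivAt_mul_add_mul_rpow l (hpos x hx)) (by fun_prop)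
  have hchirp : ∫ x in b..c, rpowChirp α β l x
      = ∫ x in b..c, (((x ^ β / (l + (1 + α) * x ^ α)) * (l + (1 + α) * x ^ α) : ℝ) : ℂ) *
          exp (I * ((l * x + x * x ^ α : ℝ) : ℂ)) := by
    refine intervalIntegral.integral_congr fun x hx => ?_
    rw [uIcc_of_le hbc] at hx
    simp only [rpowChirp, div_mul_cancel₀ _ (hfreq_pos x hx).ne']
  calc ‖∫ x in b..c, rpowChirp α β l x‖ ≤ 2 * (b ^ β / (l + (1 + α) * b ^ α)) := hchirp ▸ hibp
    _ ≤ 2 * (b ^ β / (b ^ α / 2)) := by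
        gcongr
        exact hfreq b ⟨le_rfl, hbc⟩
    _ = 4 * b ^ (β - α) := by rw [Real.rpow_sub hb]; ring

theorem eventually_norm_integral_rpowChirp_le {α β : ℝ} (hα : 0 < α) (hβα : β < α) (M : ℝ) :
    ∀ᶠ b in atTop, ∀ c ≥ b, ∀ l ∈ Icc (-M) M,
      ‖∫ x in b..c, rpowChirp α β l x‖ ≤ 4 * b ^ (β - α) := by
  have hk : 0 < (1 + α) * (α - β) := by nlinarith
  filter_upwards [eventually_gt_atTop 0,
    (tendsto_rpow_atTop hα).eventually_ge_atTop (2 * M),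
    (tendsto_rpow_atTop hα).eventually_ge_atTop (|β| * M / ((1 + α) * (α - β)))]
    with b hb hbM hbβ c hbc l hl
  rw [div_le_iff₀ hk] at hbβ
  have hle : ∀ x ∈ Icc b c, b ^ α ≤ x ^ α := fun x hx => Real.rpow_le_rpow hb.le hx.1 hα.le
  have hβl : β * l ≤ |β| * M :=
    (le_abs_self _).trans (by rw [abs_mul]; gcongr; exact abs_le.2 hl)
  refine norm_integral_rpowChirp_le hb hbc (fun x hx => ?_) (fun x hx => ?_)
  · nlinarith [hle x hx, hl.1, Real.rpow_nonneg (hb.trans_le hx.1).le α]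
  · nlinarith [mul_le_mul_of_nonneg_left (hle x hx) hk.le]

theorem uniformCauchySeqOn_integral_symm {α β : ℝ} (hα : 0 < α) (hβα : β < α)
    {f : ℝ → ℝ → ℂ} (hf : ∀ l, LocallyIntegrable (f l)) {ε ζ : ℂ} (hε : ‖ε‖ = 1) (hζ : ‖ζ‖ = 1)
    (hsymm : ∀ l x, f l (-x) = ε * conj (f l x))
    (hpos : ∀ l x, 0 < x → f l x = ζ * rpowChirp α β l x) (M : ℝ) :
    UniformCauchySeqOn (fun R l => ∫ x in -R..R, f l x) atTop (Icc (-M) M) := by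
  refine uniformCauchySeqOn_of_norm_sub_le (ε := fun b => 2 * (4 * b ^ (β - α))) ?_ ?_
  · simpa [neg_sub] using
      ((tendsto_rpow_neg_atTop (by linarith : 0 < α - β)).const_mul 4).const_mul 2
  filter_upwards [eventually_norm_integral_rpowChirp_le hα hβα M, eventually_gt_atTop 0]
    with b hb hb0 c hbc l hl
  have hchirp : ∫ x in b..c, f l x = ζ * ∫ x in b..c, rpowChirp α β l x := by
    rw [← intervalIntegral.integral_const_mul]
    refine intervalIntegral.integral_congr fun x hx => hpos l x ?_
    rw [uIcc_of_le hbc] at hx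
    exact hb0.trans_le hx.1
  calc ‖(∫ x in -c..c, f l x) - ∫ x in -b..b, f l x‖ ≤ 2 * ‖∫ x in b..c, f l x‖ :=
        norm_integral_symm_sub_le (hf l) hε (hsymm l) b c
    _ ≤ 2 * (4 * b ^ (β - α)) := by
        rw [hchirp, norm_mul, hζ, one_mul]
        gcongr
        exact hb c hbc l hl

noncomputable def Fintegrand (α l ξ : ℝ) : ℂ :=
  (Real.sign ξ : ℂ) *
    Complex.exp (-Complex.I * (Real.sign ξ : ℂ) * ((Real.pi / 4 : ℝ) : ℂ)) *
    ((|ξ| ^ (-(2⁻¹) : ℝ) : ℝ) : ℂ) *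
    Complex.exp (Complex.I * ((l * ξ + ξ * |ξ| ^ α : ℝ) : ℂ))

noncomputable def Hintegrand (α l ξ : ℝ) : ℂ :=
  Complex.exp (-Complex.I * (Real.sign ξ : ℂ) * ((Real.pi / 4 : ℝ) : ℂ)) *
    ((|ξ| ^ (2⁻¹ : ℝ) : ℝ) : ℂ) *
    Complex.exp (Complex.I * ((l * ξ + ξ * |ξ| ^ α : ℝ) : ℂ))

theorem Fpartial_eq_integral (α l R : ℝ) : Fpartial α l R = ∫ ξ in (-R)..R, Fintegrand α l ξ :=
  rfl

theorem Hpartial_eq_integral (α l R : ℝ) : Hpartial α l R = ∫ ξ in (-R)..R, Hintegrand α l ξ :=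
  rfl

section Integrands

variable (α l ξ : ℝ)

theorem measurable_Fintegrand : Measurable (Fintegrand α l) := by
  unfold Fintegrand; fun_prop

theorem measurable_Hintegrand : Measurable (Hintegrand α l) := by
  unfold Hintegrand; fun_prop

theorem Fintegrand_neg : Fintegrand α l (-ξ) = -conj (Fintegrand α l ξ) := by
  simp only [Fintegrand, Real.sign_neg, abs_neg, map_mul, map_neg, ← exp_conj, conj_ofReal, conj_I]
  push_cast
  ring_nf

theorem Hintegrand_neg : Hintegrand α l (-ξ) = conj (Hintegrand α l ξ) := by
  simp only [Hintegrand, Real.sign_neg, abs_neg, map_mul, map_neg, ← exp_conj, conj_ofReal, conj_I]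
  push_cast
  ring_nf

variable {ξ} in
theorem Fintegrand_of_pos (hξ : 0 < ξ) :
    Fintegrand α l ξ = exp (-I * (Real.pi / 4 : ℝ)) * rpowChirp α (-2⁻¹) l ξ := by
  rw [Fintegrand, rpowChirp, Real.sign_of_pos hξ, abs_of_pos hξ]
  push_cast
  ring_nf

variable {ξ} in
theorem Hintegrand_of_pos (hξ : 0 < ξ) :
    Hintegrand α l ξ = exp (-I * (Real.pi / 4 : ℝ)) * rpowChirp α 2⁻¹ l ξ := by
  rw [Hintegrand, rpowChirp, Real.sign_of_pos hξ, abs_of_pos hξ]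
  push_cast
  ring_nf

theorem ofReal_mul_Fintegrand : (ξ : ℂ) * Fintegrand α l ξ = Hintegrand α l ξ := by
  have hsign : Real.sign ξ * ξ = |ξ| := by
    rcases lt_trichotomy ξ 0 with h | rfl | h
    · simp [Real.sign_of_neg h, abs_of_neg h]
    · simp
    · simp [Real.sign_of_pos h, abs_of_pos h]
  have : Real.sign ξ * |ξ| ^ (-(2⁻¹) : ℝ) * ξ = |ξ| ^ (2⁻¹ : ℝ) := by
    rw [mul_right_comm, hsign, ← Real.rpow_one_add' (abs_nonneg ξ) (by norm_num)]
    norm_num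
  simp only [Fintegrand, Hintegrand]
  rw [← this]
  push_cast
  ring

theorem hasDerivAt_Fintegrand :
    HasDerivAt (fun l => Fintegrand α l ξ) (I * Hintegrand α l ξ) l := by
  have := ((((hasDerivAt_id l).mul_const ξ).add_const (ξ * |ξ| ^ α)).ofReal_comp.const_mul I).cexp
  rw [← ofReal_mul_Fintegrand]
  refine (this.const_mul _).congr_deriv ?_
  simp only [Fintegrand, id]
  push_cast
  ring

theorem norm_Fintegrand_le : ‖Fintegrand α l ξ‖ ≤ |ξ| ^ (-(2⁻¹) : ℝ) := by
  have hsign : |Real.sign ξ| ≤ 1 := by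
    rcases Real.sign_apply_eq ξ with h | h | h <;> simp [h]
  simpa [Fintegrand, norm_exp, abs_of_nonneg (Real.rpow_nonneg (abs_nonneg ξ) _)] using
    mul_le_of_le_one_left (Real.rpow_nonneg (abs_nonneg ξ) _) hsign

theorem norm_Hintegrand : ‖Hintegrand α l ξ‖ = |ξ| ^ (2⁻¹ : ℝ) := by
  simp [Hintegrand, norm_exp, Real.rpow_nonneg]

end Integrands

theorem locallyIntegrable_Fintegrand (α l : ℝ) : LocallyIntegrable (Fintegrand α l) :=
  locallyIntegrable_of_norm_le_abs_rpow (by norm_num)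
    (measurable_Fintegrand α l).aestronglyMeasurable (norm_Fintegrand_le α l)

theorem locallyIntegrable_Hintegrand (α l : ℝ) : LocallyIntegrable (Hintegrand α l) :=
  locallyIntegrable_of_norm_le_abs_rpow (by norm_num)
    (measurable_Hintegrand α l).aestronglyMeasurable (fun ξ => (norm_Hintegrand α l ξ).le)

theorem hasDerivAt_Fpartial (α R l : ℝ) :
    HasDerivAt (fun l => Fpartial α l R) (I * Hpartial α l R) l := by
  have := intervalIntegral.hasDerivAt_integral_of_dominated_loc_of_deriv_le (μ := volume)
    (a := -R) (b := R) (F := fun l ξ => Fintegrand α l ξ) (F' := fun l ξ => I * Hintegrand α l ξ)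
    (x₀ := l) (bound := fun ξ => |ξ| ^ (2⁻¹ : ℝ)) univ_mem
    (Eventually.of_forall fun l => (measurable_Fintegrand α l).aestronglyMeasurable)
    ((locallyIntegrable_Fintegrand α l).integrableOn_isCompact isCompact_uIcc).intervalIntegrable
    ((measurable_Hintegrand α l).const_mul I).aestronglyMeasurable
    (Eventually.of_forall fun ξ _ l _ => by rw [norm_mul, norm_I, one_mul, norm_Hintegrand])
    (((Real.continuous_rpow_const (by norm_num)).comp continuous_abs).intervalIntegrable _ _)
    (Eventually.of_forall fun ξ _ l _ => hasDerivAt_Fintegrand α l ξ)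
  simpa only [Fpartial_eq_integral, Hpartial_eq_integral, intervalIntegral.integral_const_mul]
    using this.2

/-- For `α > 1/2`, the function `F` (given at every point by the improper Riemann integral
`Fpartial`) is differentiable on `ℝ` with `F'(λ) = i H(λ)` for every `λ`, where `H` is
given at every point by the improper Riemann integral `Hpartial`. -/
theorem F_deriv_eq_iH (α : ℝ) (hα : 1 / 2 < α) :
    ∃ F H : ℝ → ℂ,
      (∀ l : ℝ, Tendsto (fun R : ℝ => Fpartial α l R) atTop (nhds (F l))) ∧
      (∀ l : ℝ, Tendsto (fun R : ℝ => Hpartial α l R) atTop (nhds (H l))) ∧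
      ∀ l : ℝ, HasDerivAt F (Complex.I * H l) l := by
  have hα0 : 0 < α := by linarith
  have hζ : ‖exp (-I * (Real.pi / 4 : ℝ))‖ = 1 := by simp [norm_exp]
  have hF : ∀ M, UniformCauchySeqOn (fun R l => Fpartial α l R) atTop (Icc (-M) M) :=
    uniformCauchySeqOn_integral_symm (f := Fintegrand α) (ε := -1) hα0 (by linarith)
      (locallyIntegrable_Fintegrand α) (by rw [norm_neg, norm_one]) hζ
      (fun l x => by rw [Fintegrand_neg, neg_one_mul]) (Fintegrand_of_pos α)
  have hH : ∀ M, UniformCauchySeqOn (fun R l => Hpartial α l R) atTop (Icc (-M) M) :=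
    uniformCauchySeqOn_integral_symm (f := Hintegrand α) hα0 (by linarith)
      (locallyIntegrable_Hintegrand α) norm_one hζ
      (fun l x => by rw [Hintegrand_neg, one_mul]) (Hintegrand_of_pos α)
  have hlim : ∀ {G : ℝ → ℝ → ℂ}, (∀ M, UniformCauchySeqOn G atTop (Icc (-M) M)) →
      ∀ l, ∃ z, Tendsto (fun R => G R l) atTop (nhds z) := fun hG l =>
    cauchySeq_tendsto_of_complete ((hG |l|).cauchySeq (abs_le.1 le_rfl))
  choose F hFlim using hlim hF
  choose H hHlim using hlim hH
  refine ⟨F, H, hFlim, hHlim, fun l => ?_⟩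
  have hHunif := (uniformContinuous_mul_left' I).comp_tendstoUniformlyOn
    (((hH (|l| + 1)).tendstoUniformlyOn_of_tendsto fun x _ => hHlim x).mono Ioo_subset_Icc_self)
  exact hasDerivAt_of_tendstoUniformlyOn isOpen_Ioo hHunif
    (Eventually.of_forall fun R x _ => hasDerivAt_Fpartial α R x) (fun x _ => hFlim x)
    ⟨by linarith [neg_abs_le l], by linarith [le_abs_self l]⟩
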